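/- Let K = (AP, S, R, S0, I) be a Kripke structure, x ∉ AP, and let K' = (AP ∪ {x}, S', R', S0', I') be x-bisimilar to K via a bisimulation ρ ⊆ S × S'. Then K' is simulated by K || 𝒳 with respect to AP ∪ {x}: the relation ρ^x = {(⟨s, i⟩, t) | ρ(s, t) and the value of x at ⟨s, i⟩ in K || 𝒳 equals I'(t, x)} is a simulation with respect to AP ∪ {x}, and every initial state of K' is related by ρ^x to some initial state of K || 𝒳. -/

import Mathlib

/-- A Kripke structure with a set of initial states. -/
structure KSM where
  S : Type
  AP : Set ℕ
  R : S → S → Prop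
  total : ∀ s, ∃ t, R s t
  inits : Set S
  L : S → Set ℕ
  Lsub : ∀ s, L s ⊆ AP

/-- `ρ` is a simulation with respect to `X` (`K` simulates `K'` via `ρ`). -/
def SimulM (K K' : KSM) (X : Set ℕ) (ρ : K.S → K'.S → Prop) : Prop :=
  ∀ s s', ρ s s' →
    (K.L s ∩ X = K'.L s' ∩ X) ∧ (∀ t', K'.R s' t' → ∃ t, K.R s t ∧ ρ t t')

/-- `ρ` is a bisimulation with respect to `X`. -/
def IsBisimM (K K' : KSM) (X : Set ℕ) (ρ : K.S → K'.S → Prop) : Prop :=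
  SimulM K K' X ρ ∧ SimulM K' K X (fun s' s => ρ s s')

/-- The structure `𝒳` : two states, the complete transition relation, the
single atomic proposition `x` (false in state `false`, true in state `true`),
both states initial. -/
def chiM (x : ℕ) : KSM where
  S := Bool
  AP := {x}
  R := fun _ _ => True
  total := fun s => ⟨s, trivial⟩
  inits := Set.univ
  L := fun b => if b then {x} else ∅
  Lsub := by intro b; cases b <;> simp

/-- Parallel synchronous composition. -/
def parCompM (K1 K2 : KSM) : KSM where
  S := K1.S × K2.S
  AP := K1.AP ∪ K2.AP
  R := fun p q => K1.R p.1 q.1 ∧ K2.R p.2 q.2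
  total := by
    rintro ⟨s, t⟩
    obtain ⟨s', hs⟩ := K1.total s
    obtain ⟨t', ht⟩ := K2.total t
    exact ⟨(s', t'), hs, ht⟩
  inits := K1.inits ×ˢ K2.inits
  L := fun p => K1.L p.1 ∪ K2.L p.2
  Lsub := fun p => Set.union_subset_union (K1.Lsub p.1) (K2.Lsub p.2)


theorem Set.inter_union_singleton_eq {α : Type*} {A B X : Set α} {x : α}
    (hX : A ∩ X = B ∩ X) (hx : x ∈ A ↔ x ∈ B) :
    A ∩ (X ∪ {x}) = B ∩ (X ∪ {x}) := by
  have hx' : A ∩ {x} = B ∩ {x} := by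
    ext a
    simp only [Set.mem_inter_iff, Set.mem_singleton_iff]
    constructor <;> rintro ⟨ha, rfl⟩ <;> simp_all
  rw [Set.inter_union_distrib_left, Set.inter_union_distrib_left, hX, hx']

namespace KSM

theorem parCompM_L_inter_left {K K₂ : KSM} (h : Disjoint K.AP K₂.AP) (p : (parCompM K K₂).S) :
    (parCompM K K₂).L p ∩ K.AP = K.L p.1 ∩ K.AP := by
  have : K₂.L p.2 ∩ K.AP = ∅ :=
    Set.disjoint_iff_inter_eq_empty.1 (h.symm.mono_left (K₂.Lsub p.2))
  simp only [parCompM, Set.union_inter_distrib_right, this, Set.union_empty]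

theorem disjoint_AP_chiM {K : KSM} {x : ℕ} (hx : x ∉ K.AP) : Disjoint K.AP (chiM x).AP :=
  Set.disjoint_singleton_right.2 hx

theorem mem_parCompM_chiM_L_self {K : KSM} {x : ℕ} (hx : x ∉ K.AP) (s : K.S) (b : Bool) :
    x ∈ (parCompM K (chiM x)).L (s, b) ↔ b = true := by
  have : x ∉ K.L s := fun h => hx (K.Lsub s h)
  cases b <;> simp [parCompM, chiM, this]

theorem exists_mem_parCompM_chiM_L_iff {K : KSM} {x : ℕ} (hx : x ∉ K.AP) (s : K.S) (P : Prop) :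
    ∃ b, (x ∈ (parCompM K (chiM x)).L (s, b) ↔ P) := by
  classical
  exact ⟨decide P, by rw [mem_parCompM_chiM_L_self hx, decide_eq_true_iff]⟩

end KSM

open KSM in
/-- The `𝒳`-component of a successor is chosen to match the value of `x` in the successor of
`K'`; the rest of the label is handled by `ρ`, since `x ∉ K.AP`. -/
theorem SimulM.parCompM_chiM {K K' : KSM} {x : ℕ} (hx : x ∉ K.AP) {ρ : K.S → K'.S → Prop}
    (hρ : SimulM K K' K.AP ρ) :
    SimulM (parCompM K (chiM x)) K' (K.AP ∪ {x})
      (fun p t => ρ p.1 t ∧ (x ∈ (parCompM K (chiM x)).L p ↔ x ∈ K'.L t)) := by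
  rintro ⟨s, b⟩ t ⟨hst, hxst⟩
  obtain ⟨hlab, hstep⟩ := hρ s t hst
  refine ⟨Set.inter_union_singleton_eq ?_ hxst, fun t' ht' => ?_⟩
  · exact (parCompM_L_inter_left (disjoint_AP_chiM hx) (s, b)).trans hlab
  · obtain ⟨u, hsu, hut'⟩ := hstep t' ht'
    obtain ⟨c, hc⟩ := exists_mem_parCompM_chiM_L_iff hx u (x ∈ K'.L t')
    exact ⟨(u, c), ⟨hsu, trivial⟩, hut', hc⟩

theorem stmt_14_general (K K' : KSM)
    (x : ℕ) (hx : x ∉ K.AP)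
    (ρ : K.S → K'.S → Prop)
    (hbis : IsBisimM K K' K.AP ρ)
    (hinit : ∀ t ∈ K'.inits, ∃ s ∈ K.inits, ρ s t) :
    SimulM (parCompM K (chiM x)) K' (K.AP ∪ {x})
      (fun p t => ρ p.1 t ∧ (x ∈ (parCompM K (chiM x)).L p ↔ x ∈ K'.L t)) ∧
    (∀ t ∈ K'.inits, ∃ p ∈ (parCompM K (chiM x)).inits,
      ρ p.1 t ∧ (x ∈ (parCompM K (chiM x)).L p ↔ x ∈ K'.L t)) := by
  refine ⟨hbis.1.parCompM_chiM hx, fun t ht => ?_⟩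
  obtain ⟨s, hs, hst⟩ := hinit t ht
  obtain ⟨b, hb⟩ := KSM.exists_mem_parCompM_chiM_L_iff hx s (x ∈ K'.L t)
  exact ⟨(s, b), ⟨hs, Set.mem_univ b⟩, hst, hb⟩

theorem stmt_14 (K K' : KSM) (hf : Finite K.S) (hf' : Finite K'.S)
    (x : ℕ) (hx : x ∉ K.AP) (hAP' : K'.AP = K.AP ∪ {x})
    (ρ : K.S → K'.S → Prop)
    (hbis : IsBisimM K K' K.AP ρ)
    (hinit : ∀ t ∈ K'.inits, ∃ s ∈ K.inits, ρ s t)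
    (hinit' : ∀ s ∈ K.inits, ∃ t ∈ K'.inits, ρ s t) :
    SimulM (parCompM K (chiM x)) K' (K.AP ∪ {x})
      (fun p t => ρ p.1 t ∧ (x ∈ (parCompM K (chiM x)).L p ↔ x ∈ K'.L t)) ∧
    (∀ t ∈ K'.inits, ∃ p ∈ (parCompM K (chiM x)).inits,
      ρ p.1 t ∧ (x ∈ (parCompM K (chiM x)).L p ↔ x ∈ K'.L t)) :=
  stmt_14_general K K' x hx ρ hbis hinit
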